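/- arXiv:1809.02250 — 2 statements merged into one kernel-verified Lean document; each statement's English description precedes it below -/
import Mathlib

section
/- Let 0 < α < 1, a < b, and let f ∈ L¹[a,b]. Then for almost every t ∈ [a,b]: d/dt [ (1/Γ(1-α)) ∫_a^t (t-s)^{-α} (I^α_{a+}f)(s) ds ] = f(t) and -d/dt [ (1/Γ(1-α)) ∫_t^b (s-t)^{-α} (I^α_{b-}f)(s) ds ] = f(t); that is, D^α_{a+} I^α_{a+} f = f and D^α_{b-} I^α_{b-} f = f almost everywhere on [a,b]. -/
/-!
`D^α_{a+}` is `d/dt ∘ I^{1-α}_{a+}`, and the semigroup law `I^β_{a+} I^α_{a+} = I^{α+β}_{a+}`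
(Fubini over the triangle `a < u ≤ s ≤ t` together with the Beta integral
`∫_u^t (t-s)^(β-1) (s-u)^(α-1) ds = Γ(α)Γ(β)/Γ(α+β) (t-u)^(α+β-1)`) turns `D^α_{a+} I^α_{a+} f`
into the derivative of `t ↦ ∫_a^t f`, which is `f` almost everywhere by Lebesgue's
differentiation theorem. The reflection `t ↦ -t` turns the right-sided operators at `b` into the
left-sided ones at `-b`.
-/

open MeasureTheory Set Real

/-- Left Riemann–Liouville fractional integral `(I^α_{a+} f)(t)`. -/
noncomputable def RLintLeft (α a : ℝ) (f : ℝ → ℝ) (t : ℝ) : ℝ :=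
  (1 / Real.Gamma α) * ∫ s in a..t, (t - s) ^ (α - 1) * f s

/-- Right Riemann–Liouville fractional integral `(I^α_{b-} f)(t)`. -/
noncomputable def RLintRight (α b : ℝ) (f : ℝ → ℝ) (t : ℝ) : ℝ :=
  (1 / Real.Gamma α) * ∫ s in t..b, (s - t) ^ (α - 1) * f s

/-- Left Riemann–Liouville fractional derivative `(D^α_{a+} f)(t)`. -/
noncomputable def RLderivLeft (α a : ℝ) (f : ℝ → ℝ) (t : ℝ) : ℝ :=
  deriv (fun τ => (1 / Real.Gamma (1 - α)) * ∫ s in a..τ, (τ - s) ^ (-α) * f s) t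

/-- Right Riemann–Liouville fractional derivative `(D^α_{b-} f)(t)`. -/
noncomputable def RLderivRight (α b : ℝ) (f : ℝ → ℝ) (t : ℝ) : ℝ :=
  - deriv (fun τ => (1 / Real.Gamma (1 - α)) * ∫ s in τ..b, (s - τ) ^ (-α) * f s) t

open intervalIntegral

lemma intervalIntegrable_sub_rpow_mul_sub_rpow {α β u t : ℝ} (hα : 0 < α) (hβ : 0 < β)
    (hut : u ≤ t) :
    IntervalIntegrable (fun s => (t - s) ^ (β - 1) * (s - u) ^ (α - 1)) volume u t := by
  rcases hut.eq_or_lt with rfl | hut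
  · exact .refl
  obtain ⟨m, hum, hmt⟩ := exists_between hut
  have hleft : IntervalIntegrable (fun s => (s - u) ^ (α - 1)) volume u m := by
    simpa using (intervalIntegrable_rpow' (r := α - 1) (by linarith)).comp_sub_right u
      (a := 0) (b := m - u)
  have hright : IntervalIntegrable (fun s => (t - s) ^ (β - 1)) volume m t := by
    simpa using ((intervalIntegrable_rpow' (r := β - 1) (by linarith)).comp_sub_left t
      (a := 0) (b := t - m)).symm
  refine (hleft.continuousOn_mul ?_).trans (hright.mul_continuousOn ?_)
  · refine ContinuousOn.rpow_const (by fun_prop) fun s hs => Or.inl ?_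
    rw [uIcc_of_le hum.le] at hs
    linarith [hs.2]
  · refine ContinuousOn.rpow_const (by fun_prop) fun s hs => Or.inl ?_
    rw [uIcc_of_le hmt.le] at hs
    linarith [hs.1]

lemma integral_rpow_mul_sub_rpow {α β c : ℝ} (hα : 0 < α) (hβ : 0 < β) (hc : 0 < c) :
    ∫ x in (0 : ℝ)..c, x ^ (α - 1) * (c - x) ^ (β - 1) =
      Real.Gamma α * Real.Gamma β / Real.Gamma (α + β) * c ^ (α + β - 1) := by
  have hscaled := Complex.betaIntegral_scaled α β hc
  rw [Complex.betaIntegral_eq_Gamma_mul_div _ _ (by simpa) (by simpa)] at hscaled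
  apply Complex.ofReal_injective
  rw [← intervalIntegral.integral_ofReal, Complex.ofReal_mul, Complex.ofReal_cpow hc.le,
    Complex.ofReal_div, Complex.ofReal_mul,
    ← Complex.Gamma_ofReal, ← Complex.Gamma_ofReal, ← Complex.Gamma_ofReal, mul_comm]
  push_cast
  rw [← hscaled]
  refine integral_congr fun x hx => ?_
  rw [uIcc_of_le hc.le] at hx
  push_cast [Complex.ofReal_cpow hx.1, Complex.ofReal_cpow (sub_nonneg.2 hx.2)]
  rfl

lemma integral_sub_rpow_mul_sub_rpow {α β u t : ℝ} (hα : 0 < α) (hβ : 0 < β) (hut : u < t) :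
    ∫ s in u..t, (t - s) ^ (β - 1) * (s - u) ^ (α - 1) =
      Real.Gamma α * Real.Gamma β / Real.Gamma (α + β) * (t - u) ^ (α + β - 1) := by
  rw [← integral_rpow_mul_sub_rpow hα hβ (sub_pos.2 hut)]
  have := integral_comp_add_right (fun s => (t - s) ^ (β - 1) * (s - u) ^ (α - 1)) u
    (a := 0) (b := t - u)
  simp only [zero_add, sub_add_cancel, add_sub_cancel_right] at this
  rw [← this]
  refine integral_congr fun x _ => ?_
  ring_nf

lemma integral_norm_sub_rpow_mul_sub_rpow_mul {α β u t : ℝ} (hα : 0 < α) (hβ : 0 < β)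
    (hut : u < t) (c : ℝ) :
    ∫ s in u..t, ‖(t - s) ^ (β - 1) * (s - u) ^ (α - 1) * c‖ =
      Real.Gamma α * Real.Gamma β / Real.Gamma (α + β) * (t - u) ^ (α + β - 1) * ‖c‖ := by
  rw [← integral_sub_rpow_mul_sub_rpow hα hβ hut, ← intervalIntegral.integral_mul_const]
  refine integral_congr fun s hs => ?_
  rw [uIcc_of_le hut.le] at hs
  simp only [norm_mul, Real.norm_eq_abs, abs_of_nonneg (rpow_nonneg (sub_nonneg.2 hs.1) _),
    abs_of_nonneg (rpow_nonneg (sub_nonneg.2 hs.2) _)]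

section Triangle

variable {E : Type*} [NormedAddCommGroup E] [NormedSpace ℝ E] {a t u : ℝ}

lemma restrict_Ioc_restrict_Ici (hu : u ∈ Ioc a t) :
    (volume.restrict (Ioc a t)).restrict (Ici u) = volume.restrict (Icc u t) := by
  rw [Measure.restrict_restrict measurableSet_Ici]
  congr 1
  ext s
  simp only [mem_inter_iff, mem_Ici, mem_Ioc, mem_Icc]
  exact ⟨fun h => ⟨h.1, h.2.2⟩, fun h => ⟨h.1, hu.1.trans_le h.1, h.2⟩⟩

lemma setIntegral_Ioc_indicator_Ici (hu : u ∈ Ioc a t) (g : ℝ → E) :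
    ∫ s in Ioc a t, (Ici u).indicator g s = ∫ s in u..t, g s := by
  rw [MeasureTheory.integral_indicator measurableSet_Ici, restrict_Ioc_restrict_Ici hu,
    integral_Icc_eq_integral_Ioc, integral_of_le hu.2]

lemma setIntegral_Ioc_indicator_Iic {s : ℝ} (hs : s ∈ Ioc a t) (g : ℝ → E) :
    ∫ u in Ioc a t, (Iic s).indicator g u = ∫ u in a..s, g u := by
  rw [MeasureTheory.integral_indicator measurableSet_Iic,
    Measure.restrict_restrict measurableSet_Iic, Iic_inter_Ioc_of_le hs.2, integral_of_le hs.1.le]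

lemma integral_integral_swap_triangle {F : ℝ → ℝ → E} (hat : a ≤ t)
    (hF : AEStronglyMeasurable (Function.uncurry F)
      ((volume.restrict (Ioc a t)).prod (volume.restrict (Ioc a t))))
    (hslice : ∀ u ∈ Ioc a t, IntervalIntegrable (F · u) volume u t)
    (hnorm : IntegrableOn (fun u => ∫ s in u..t, ‖F s u‖) (Ioc a t)) :
    ∫ s in a..t, ∫ u in a..s, F s u = ∫ u in a..t, ∫ s in u..t, F s u := by
  set μ := volume.restrict (Ioc a t)
  set G : ℝ × ℝ → E := {p | p.2 ≤ p.1}.indicator (Function.uncurry F)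
  have hG : Integrable G (μ.prod μ) := by
    rw [integrable_prod_iff' (hF.indicator (measurableSet_le measurable_snd measurable_fst))]
    constructor
    · filter_upwards [ae_restrict_mem measurableSet_Ioc] with u hu
      change Integrable ((Ici u).indicator (F · u)) μ
      rw [integrable_indicator_iff measurableSet_Ici, IntegrableOn, restrict_Ioc_restrict_Ici hu]
      exact (intervalIntegrable_iff_integrableOn_Icc_of_le hu.2).1 (hslice u hu)
    · refine hnorm.congr_fun (fun u hu => ?_) measurableSet_Ioc
      change _ = ∫ s, ‖(Ici u).indicator (F · u) s‖ ∂μ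
      simp only [norm_indicator_eq_indicator_norm]
      exact (setIntegral_Ioc_indicator_Ici hu _).symm
  calc ∫ s in a..t, ∫ u in a..s, F s u = ∫ s, ∫ u, G (s, u) ∂μ ∂μ := by
        rw [integral_of_le hat]
        exact setIntegral_congr_fun measurableSet_Ioc fun s hs =>
          (setIntegral_Ioc_indicator_Iic hs _).symm
    _ = ∫ u, ∫ s, G (s, u) ∂μ ∂μ := integral_integral_swap hG
    _ = ∫ u in a..t, ∫ s in u..t, F s u := by
        rw [integral_of_le hat]
        exact setIntegral_congr_fun measurableSet_Ioc fun u hu =>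
          setIntegral_Ioc_indicator_Ici hu _

end Triangle

lemma integral_integral_sub_rpow_mul_sub_rpow_mul {α β a t : ℝ} {f : ℝ → ℝ} (hα : 0 < α)
    (hβ : 0 < β) (hαβ : 1 ≤ α + β) (hat : a ≤ t) (hf : IntegrableOn f (Ioc a t)) :
    ∫ s in a..t, ∫ u in a..s, (t - s) ^ (β - 1) * (s - u) ^ (α - 1) * f u =
      Real.Gamma α * Real.Gamma β / Real.Gamma (α + β) *
        ∫ u in a..t, (t - u) ^ (α + β - 1) * f u := by
  set B := Real.Gamma α * Real.Gamma β / Real.Gamma (α + β)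
  -- `1 ≤ α + β` keeps the weight `(t - u) ^ (α + β - 1)` bounded on `[a, t]`
  have hf_weighted : IntegrableOn (fun u => B * (t - u) ^ (α + β - 1) * ‖f u‖) (Ioc a t) := by
    have hcont : ContinuousOn (fun u => B * (t - u) ^ (α + β - 1)) (Icc a t) :=
      (continuous_const.mul
        ((continuous_rpow_const (by linarith)).comp (continuous_sub_left t))).continuousOn
    exact .continuousOn_mul_of_subset hcont hf.norm isCompact_Icc measurableSet_Ioc
      Ioc_subset_Icc_self
  rw [integral_integral_swap_triangle hat ?measurable (fun u hu => ?slice) ?norm,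
    ← intervalIntegral.integral_const_mul, integral_of_le hat, integral_of_le hat,
    integral_Ioc_eq_integral_Ioo, integral_Ioc_eq_integral_Ioo]
  · refine setIntegral_congr_fun measurableSet_Ioo fun u hu => ?_
    rw [intervalIntegral.integral_mul_const, integral_sub_rpow_mul_sub_rpow hα hβ hu.2]
    ring
  case measurable =>
    exact (Measurable.aestronglyMeasurable (by fun_prop)).mul hf.aestronglyMeasurable.comp_snd
  case slice => exact (intervalIntegrable_sub_rpow_mul_sub_rpow hα hβ hu.2).mul_const _
  case norm =>
    rw [integrableOn_Ioc_iff_integrableOn_Ioo]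
    exact (hf_weighted.mono_set Ioo_subset_Ioc_self).congr_fun
      (fun u hu => (integral_norm_sub_rpow_mul_sub_rpow_mul hα hβ hu.2 _).symm) measurableSet_Ioo

lemma RLintLeft_one (a : ℝ) (f : ℝ → ℝ) (t : ℝ) : RLintLeft 1 a f t = ∫ s in a..t, f s := by
  simp [RLintLeft]

lemma RLderivLeft_eq_deriv_RLintLeft (α a : ℝ) (f : ℝ → ℝ) :
    RLderivLeft α a f = deriv (RLintLeft (1 - α) a f) := by
  ext t
  rw [RLderivLeft]
  congr 1
  ext τ
  rw [RLintLeft, sub_sub_cancel_left]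

theorem RLintLeft_RLintLeft {α β a t : ℝ} {f : ℝ → ℝ} (hα : 0 < α) (hβ : 0 < β)
    (hαβ : 1 ≤ α + β) (hat : a ≤ t) (hf : IntegrableOn f (Ioc a t)) :
    RLintLeft β a (RLintLeft α a f) t = RLintLeft (α + β) a f t := by
  have hinner (s : ℝ) : (t - s) ^ (β - 1) * RLintLeft α a f s =
      (Real.Gamma α)⁻¹ * ∫ u in a..s, (t - s) ^ (β - 1) * (s - u) ^ (α - 1) * f u := by
    simp only [RLintLeft, mul_assoc, intervalIntegral.integral_const_mul]
    ring
  have hΓα := (Real.Gamma_pos_of_pos hα).ne'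
  have hΓβ := (Real.Gamma_pos_of_pos hβ).ne'
  have hΓαβ := (Real.Gamma_pos_of_pos (add_pos hα hβ)).ne'
  rw [RLintLeft, RLintLeft]
  simp_rw [hinner, intervalIntegral.integral_const_mul]
  rw [integral_integral_sub_rpow_mul_sub_rpow_mul hα hβ hαβ hat hf]
  field_simp

theorem ae_RLderivLeft_RLintLeft {α a b : ℝ} {f : ℝ → ℝ} (hα : 0 < α) (hα1 : α < 1)
    (hf : IntervalIntegrable f volume a b) :
    ∀ᵐ t, t ∈ Ioo a b → RLderivLeft α a (RLintLeft α a f) t = f t := by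
  filter_upwards [hf.ae_hasDerivAt_integral] with t hderiv ht
  have hab : a ≤ b := (ht.1.trans ht.2).le
  have hf_Ioc : IntegrableOn f (Ioc a b) := (intervalIntegrable_iff_integrableOn_Ioc_of_le hab).1 hf
  rw [RLderivLeft_eq_deriv_RLintLeft]
  have hderiv := hderiv (Ioo_subset_Icc_self.trans Icc_subset_uIcc ht) a left_mem_uIcc
  refine (hderiv.congr_of_eventuallyEq ?_).deriv
  filter_upwards [Ioo_mem_nhds ht.1 ht.2] with τ hτ
  rw [RLintLeft_RLintLeft hα (sub_pos.2 hα1) (by linarith) hτ.1.le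
    (hf_Ioc.mono_set (Ioc_subset_Ioc_right hτ.2.le)), add_sub_cancel, RLintLeft_one]

lemma RLintRight_eq_RLintLeft_comp_neg (α b : ℝ) (f : ℝ → ℝ) (t : ℝ) :
    RLintRight α b f t = RLintLeft α (-b) (fun s => f (-s)) (-t) := by
  rw [RLintRight, RLintLeft, ← integral_comp_neg]
  simp only [neg_neg, sub_neg_eq_add, neg_add_eq_sub]

lemma RLderivRight_eq_RLderivLeft_comp_neg (α b : ℝ) (f : ℝ → ℝ) (t : ℝ) :
    RLderivRight α b f t = RLderivLeft α (-b) (fun s => f (-s)) (-t) := by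
  rw [RLderivRight, RLderivLeft, neg_eq_iff_eq_neg, ← deriv_comp_neg]
  congr 1
  ext τ
  rw [← integral_comp_neg]
  simp only [neg_neg, sub_neg_eq_add, neg_add_eq_sub]

theorem ae_RLderivRight_RLintRight {α a b : ℝ} {f : ℝ → ℝ} (hα : 0 < α) (hα1 : α < 1)
    (hf : IntervalIntegrable f volume a b) :
    ∀ᵐ t, t ∈ Ioo a b → RLderivRight α b (RLintRight α b f) t = f t := by
  have hf_neg : IntervalIntegrable (fun s => f (-s)) volume (-b) (-a) :=
    (Iff.mp IntervalIntegrable.iff_comp_neg hf).symm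
  filter_upwards [(Measure.measurePreserving_neg volume).quasiMeasurePreserving.ae
    (ae_RLderivLeft_RLintLeft hα hα1 hf_neg)] with t ht hmem
  rw [RLderivRight_eq_RLderivLeft_comp_neg]
  simp_rw [RLintRight_eq_RLintLeft_comp_neg, neg_neg]
  simpa using ht (by simpa [and_comm] using hmem)

theorem RLderiv_RLint (a b α : ℝ) (hab : a < b) (hα : 0 < α) (hα1 : α < 1)
    (f : ℝ → ℝ) (hf : IntegrableOn f (Set.Icc a b)) :
    ∀ᵐ t ∂(volume.restrict (Set.Icc a b)),
      RLderivLeft α a (RLintLeft α a f) t = f t ∧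
      RLderivRight α b (RLintRight α b f) t = f t := by
  have hf' : IntervalIntegrable f volume a b :=
    (intervalIntegrable_iff_integrableOn_Icc_of_le hab.le).2 hf
  rw [Measure.restrict_congr_set Ioo_ae_eq_Icc.symm]
  filter_upwards [ae_restrict_mem measurableSet_Ioo,
    ae_restrict_of_ae (ae_RLderivLeft_RLintLeft hα hα1 hf'),
    ae_restrict_of_ae (ae_RLderivRight_RLintRight hα hα1 hf')] with t ht hleft hright
  exact ⟨hleft ht, hright ht⟩
end

section
/- Let 0 < α ≤ 1, a < b, and let h be continuous on [a,b]. Define F : [a,b] → ℝ by F(s) = (b-s)^{1-α} · (1/Γ(α)) ∫_s^b (t-s)^{α-1} (b-t)^{α-1} h(t) dt for s ∈ [a,b) and F(b) = 0. Then F is continuous on [a,b]. -/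
/-!
The substitution `t = s + (b - s) u` rewrites `F s`, for `s < b`, as
`(b - s) ^ α / Γ(α) * ∫₀¹ u ^ (α - 1) (1 - u) ^ (α - 1) h (s + (b - s) u) du`. This expression
also vanishes at `s = b`, and it is continuous on `[a, b]`: the factor `(b - s) ^ α` because
`α > 0`, and the integral by dominated convergence, with the integrable Beta kernel times a bound
for `|h|` as dominating function.
-/

open MeasureTheory Set Real

theorem integrableOn_rpow_mul_one_sub_rpow {α β : ℝ} (hα : 0 < α) (hβ : 0 < β) :
    IntegrableOn (fun u : ℝ => u ^ (α - 1) * (1 - u) ^ (β - 1)) (Ioc 0 1) := by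
  have hB := Complex.betaIntegral_convergent (u := α) (v := β) (by simpa) (by simpa)
  rw [intervalIntegrable_iff_integrableOn_Ioc_of_le zero_le_one] at hB
  rw [integrableOn_Ioc_iff_integrableOn_Ioo] at hB ⊢
  refine IntegrableOn.congr_fun hB.norm (fun u hu => ?_) measurableSet_Ioo
  have h1u : 0 < 1 - u := sub_pos.2 hu.2
  rw [norm_mul, Complex.norm_cpow_eq_rpow_re_of_pos hu.1,
    show (1 : ℂ) - u = (1 - u : ℝ) by push_cast; rfl, Complex.norm_cpow_eq_rpow_re_of_pos h1u]
  simp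

theorem add_sub_mul_mem_Icc {a b s u : ℝ} (hs : s ∈ Icc a b) (hu : u ∈ Icc (0 : ℝ) 1) :
    s + (b - s) * u ∈ Icc a b := by
  rw [mul_comm]
  exact (convex_Icc a b).add_smul_sub_mem hs (right_mem_Icc.2 (hs.1.trans hs.2)) hu

theorem continuousOn_integral_mul_comp_add_sub_mul {k h : ℝ → ℝ} {a b : ℝ}
    (hk : IntegrableOn k (Ioc 0 1)) (hh : ContinuousOn h (Icc a b)) :
    ContinuousOn (fun s => ∫ u in Ioc 0 1, k u * h (s + (b - s) * u)) (Icc a b) := by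
  obtain ⟨C, hC⟩ := isCompact_Icc.exists_bound_of_continuousOn hh
  have hh_comp : ∀ s ∈ Icc a b, ContinuousOn (fun u => h (s + (b - s) * u)) (Ioc 0 1) :=
    fun s hs => hh.comp (by fun_prop) fun u hu => add_sub_mul_mem_Icc hs (Ioc_subset_Icc_self hu)
  refine continuousOn_of_dominated (bound := fun u => ‖k u‖ * C) ?_ ?_ (hk.norm.mul_const C) ?_
  · exact fun s hs => hk.aestronglyMeasurable.mul
      ((hh_comp s hs).aestronglyMeasurable measurableSet_Ioc)
  · intro s hs
    filter_upwards [self_mem_ae_restrict measurableSet_Ioc] with u hu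
    rw [norm_mul]
    exact mul_le_mul_of_nonneg_left
      (hC _ (add_sub_mul_mem_Icc hs (Ioc_subset_Icc_self hu))) (norm_nonneg _)
  · filter_upwards [self_mem_ae_restrict measurableSet_Ioc] with u hu
    exact continuousOn_const.mul
      (hh.comp (by fun_prop) fun s hs => add_sub_mul_mem_Icc hs (Ioc_subset_Icc_self hu))

theorem integral_sub_rpow_mul_sub_rpow_mul {s b : ℝ} (hsb : s < b) (α β : ℝ) (h : ℝ → ℝ) :
    ∫ t in s..b, (t - s) ^ (α - 1) * (b - t) ^ (β - 1) * h t =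
      (b - s) ^ (α + β - 1) *
        ∫ u in Ioc 0 1, u ^ (α - 1) * (1 - u) ^ (β - 1) * h (s + (b - s) * u) := by
  have hbs : 0 < b - s := sub_pos.2 hsb
  have hsubst := intervalIntegral.smul_integral_comp_add_mul (a := 0) (b := 1)
    (fun t => (t - s) ^ (α - 1) * (b - t) ^ (β - 1) * h t) (b - s) s
  simp only [mul_zero, add_zero, mul_one, add_sub_cancel, smul_eq_mul] at hsubst
  have hpow : (b - s) ^ (α + β - 1) = (b - s) * (b - s) ^ (α - 1) * (b - s) ^ (β - 1) := by
    rw [show α + β - 1 = 1 + (α - 1) + (β - 1) by ring, rpow_add hbs, rpow_add hbs, rpow_one]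
  rw [← hsubst, intervalIntegral.integral_of_le zero_le_one, ← integral_const_mul,
    ← integral_const_mul]
  refine setIntegral_congr_fun measurableSet_Ioc fun u hu => ?_
  rw [add_sub_cancel_left, show b - (s + (b - s) * u) = (b - s) * (1 - u) by ring,
    mul_rpow hbs.le hu.1.le, mul_rpow hbs.le (sub_nonneg.2 hu.2), hpow]
  ring

theorem weighted_fractional_integral_continuous_general (a b α : ℝ)
    (hα : 0 < α)
    (h : ℝ → ℝ) (hh : ContinuousOn h (Set.Icc a b))
    (F : ℝ → ℝ)
    (hF : ∀ s ∈ Set.Ico a b,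
      F s = (b - s) ^ (1 - α) *
        ((1 / Real.Gamma α) * ∫ t in s..b, (t - s) ^ (α - 1) * (b - t) ^ (α - 1) * h t))
    (hFb : F b = 0) :
    ContinuousOn F (Set.Icc a b) := by
  set G := fun s => ∫ u in Ioc 0 1, u ^ (α - 1) * (1 - u) ^ (α - 1) * h (s + (b - s) * u)
  have hG : ContinuousOn G (Icc a b) :=
    continuousOn_integral_mul_comp_add_sub_mul (integrableOn_rpow_mul_one_sub_rpow hα hα) hh
  have hF_eq : EqOn F (fun s => (b - s) ^ α * ((1 / Gamma α) * G s)) (Icc a b) := by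
    intro s hs
    dsimp only
    rcases hs.2.eq_or_lt with rfl | hsb
    · rw [hFb, sub_self, zero_rpow hα.ne', zero_mul]
    rw [hF s ⟨hs.1, hsb⟩, integral_sub_rpow_mul_sub_rpow_mul hsb,
      show (b - s) ^ α = (b - s) ^ (1 - α) * (b - s) ^ (α + α - 1) by
        rw [← rpow_add (sub_pos.2 hsb)]; ring_nf]
    ring
  refine ContinuousOn.congr ?_ hF_eq
  exact ((continuousOn_const.sub continuousOn_id).rpow_const fun _ _ => Or.inr hα.le).mul
    (continuousOn_const.mul hG)

theorem weighted_fractional_integral_continuous (a b α : ℝ) (hab : a < b)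
    (hα : 0 < α) (hα1 : α ≤ 1)
    (h : ℝ → ℝ) (hh : ContinuousOn h (Set.Icc a b))
    (F : ℝ → ℝ)
    (hF : ∀ s ∈ Set.Ico a b,
      F s = (b - s) ^ (1 - α) *
        ((1 / Real.Gamma α) * ∫ t in s..b, (t - s) ^ (α - 1) * (b - t) ^ (α - 1) * h t))
    (hFb : F b = 0) :
    ContinuousOn F (Set.Icc a b) :=
  weighted_fractional_integral_continuous_general a b α hα h hh F hF hFb
end
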